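/- arXiv:1706.09157 — 3 statements merged into one kernel-verified Lean document; each statement's English description precedes it below -/
import Mathlib

section
/- Suppose there is a homotopy commutative square with homotopy equivalences g : E ≃ E' and h : B ≃ B' satisfying p'∘g ≃ h∘p. Then for any map f : B' → X, secat_{f∘h}(p) = secat_f(p'). -/
open ContinuousMap Set

/-- `U ⊆ B` is `f`-categorical for `p : E → B`: it is open and admits `s : U → E`
with `f ∘ p ∘ s` homotopic to `f|_U`. -/
def IsFCatOpen {E B X : Type} [TopologicalSpace E] [TopologicalSpace B] [TopologicalSpace X]
    (p : C(E, B)) (f : C(B, X)) (U : Set B) : Prop :=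
  IsOpen U ∧ ∃ s : C(U, E), ((f.comp p).comp s).Homotopic (f.restrict U)

/-- The `f`-sectional category `secat_f(p)`: least `n` such that `B` is covered by
`n+1` `f`-categorical open sets (`⊤` if none exists). -/
noncomputable def secatF {E B X : Type} [TopologicalSpace E] [TopologicalSpace B] [TopologicalSpace X]
    (p : C(E, B)) (f : C(B, X)) : ℕ∞ :=
  sInf ((↑) '' {n : ℕ | ∃ U : Fin (n + 1) → Set B,
    (∀ i, IsFCatOpen p f (U i)) ∧ ⋃ i, U i = univ})

/-- The (normalized) Lusternik–Schnirelmann category of a map: least `n` such that the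
domain is covered by `n+1` open sets on each of which the map is null-homotopic. -/
noncomputable def catMap {B X : Type} [TopologicalSpace B] [TopologicalSpace X]
    (f : C(B, X)) : ℕ∞ :=
  sInf ((↑) '' {n : ℕ | ∃ U : Fin (n + 1) → Set B,
    (∀ i, IsOpen (U i) ∧ (f.restrict (U i)).Nullhomotopic) ∧ ⋃ i, U i = univ})

/-- The path fibration `π : X^I → X × X`, `π(α) = (α 0, α 1)`. -/
noncomputable def pathFib (X : Type) [TopologicalSpace X] : C(C(unitInterval, X), X × X) :=
  ⟨fun α => (α 0, α 1), by fun_prop⟩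

/-- The diagonal map `Δ : X → X × X`. -/
def diagMap (X : Type) [TopologicalSpace X] : C(X, X × X) := ⟨fun x => (x, x), by fun_prop⟩

/-- The topological complexity of a map, `TC(f) = secat_{f×f}(π)`. -/
noncomputable def TCmap {X Y : Type} [TopologicalSpace X] [TopologicalSpace Y] (f : C(X, Y)) : ℕ∞ :=
  secatF (pathFib X) (f.prodMap f)

/-!
Pulling an `f`-categorical cover of `B'` back along `h` gives an `(f ∘ h)`-categorical cover
of `B`: a local section `s` of `p'` over `U` yields the local section `g⁻¹ ∘ s ∘ h` of `p` over
`h⁻¹ U`, because `h ∘ p ∘ g⁻¹ ≃ p' ∘ g ∘ g⁻¹ ≃ p'`. This gives `secat_{f∘h}(p) ≤ secat_f(p')`.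
The same argument with `g⁻¹, h⁻¹` in place of `g, h` gives
`secat_f(p') = secat_{f∘h∘h⁻¹}(p') ≤ secat_{f∘h}(p)`, using that `secat_f` only depends on the
homotopy class of `f`.
-/

section

variable {E B E' B' X : Type} [TopologicalSpace E] [TopologicalSpace B]
  [TopologicalSpace E'] [TopologicalSpace B'] [TopologicalSpace X]

theorem IsFCatOpen.of_homotopic {p : C(E, B)} {f f' : C(B, X)} (hf : f.Homotopic f') {U : Set B}
    (hU : IsFCatOpen p f U) : IsFCatOpen p f' U := by
  obtain ⟨hopen, s, hs⟩ := hU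
  refine ⟨hopen, s, ?_⟩
  have hsource : ((f'.comp p).comp s).Homotopic ((f.comp p).comp s) :=
    (hf.symm.comp (.refl p)).comp (.refl s)
  have htarget : (f.restrict U).Homotopic (f'.restrict U) :=
    hf.comp (.refl ((ContinuousMap.id B).restrict U))
  exact (hsource.trans hs).trans htarget

theorem IsFCatOpen.preimage {p : C(E, B)} {p' : C(E', B')} {f : C(B', X)} {h : C(B, B')}
    {k : C(E', E)} (hk : ((h.comp p).comp k).Homotopic p') {U : Set B'}
    (hU : IsFCatOpen p' f U) : IsFCatOpen p (f.comp h) (h ⁻¹' U) := by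
  obtain ⟨hopen, s, hs⟩ := hU
  refine ⟨hopen.preimage h.continuous, k.comp (s.comp (h.restrictPreimage U)), ?_⟩
  have hproj : (f.comp (((h.comp p).comp k).comp (s.comp (h.restrictPreimage U)))).Homotopic
      (f.comp (p'.comp (s.comp (h.restrictPreimage U)))) :=
    (Homotopic.refl f).comp (hk.comp (.refl _))
  exact hproj.trans (hs.comp (.refl (h.restrictPreimage U)))

theorem secatF_le_of_forall_isFCatOpen_preimage {p : C(E, B)} {p' : C(E', B')} {f : C(B, X)}
    {f' : C(B', X)} (h : C(B, B'))
    (hU : ∀ U, IsFCatOpen p' f' U → IsFCatOpen p f (h ⁻¹' U)) :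
    secatF p f ≤ secatF p' f' := by
  apply sInf_le_sInf
  rintro _ ⟨n, ⟨U, hcat, hcover⟩, rfl⟩
  refine ⟨n, ⟨fun i => h ⁻¹' U i, fun i => hU _ (hcat i), ?_⟩, rfl⟩
  rw [← preimage_iUnion, hcover, preimage_univ]

theorem secatF_congr_of_homotopic (p : C(E, B)) {f f' : C(B, X)} (hf : f.Homotopic f') :
    secatF p f = secatF p f' :=
  le_antisymm
    (secatF_le_of_forall_isFCatOpen_preimage (.id B) fun _ => IsFCatOpen.of_homotopic hf.symm)
    (secatF_le_of_forall_isFCatOpen_preimage (.id B) fun _ => IsFCatOpen.of_homotopic hf)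

theorem secatF_comp_le {p : C(E, B)} {p' : C(E', B')} (f : C(B', X)) {h : C(B, B')}
    {k : C(E', E)} (hk : ((h.comp p).comp k).Homotopic p') :
    secatF p (f.comp h) ≤ secatF p' f :=
  secatF_le_of_forall_isFCatOpen_preimage h fun _ => IsFCatOpen.preimage hk

end

/-- If `p ∼ p'` via homotopy equivalences `g : E ≃ E'`, `h : B ≃ B'` with
`p' ∘ g ≃ h ∘ p`, then for any `f : B' → X`, `secat_{f∘h}(p) = secat_f(p')`. -/
theorem secatF_eq_of_homotopyEquiv {E B E' B' X : Type} [TopologicalSpace E] [TopologicalSpace B]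
    [TopologicalSpace E'] [TopologicalSpace B'] [TopologicalSpace X]
    (p : C(E, B)) (p' : C(E', B')) (g : E ≃ₕ E') (h : B ≃ₕ B')
    (hsq : (p'.comp g.toFun).Homotopic (h.toFun.comp p))
    (f : C(B', X)) :
    secatF p (f.comp h.toFun) = secatF p' f := by
  have hforward : ((h.toFun.comp p).comp g.invFun).Homotopic p' := by
    simpa [comp_assoc] using
      (hsq.symm.comp (.refl g.invFun)).trans ((Homotopic.refl p').comp g.right_inv)
  have hbackward : ((h.invFun.comp p').comp g.toFun).Homotopic p := by
    simpa [← comp_assoc] using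
      ((Homotopic.refl h.invFun).comp hsq).trans (h.left_inv.comp (.refl p))
  have hf : ((f.comp h.toFun).comp h.invFun).Homotopic f := by
    simpa [comp_assoc] using (Homotopic.refl f).comp h.right_inv
  refine le_antisymm (secatF_comp_le f hforward) ?_
  rw [← secatF_congr_of_homotopic p' hf]
  exact secatF_comp_le (f.comp h.toFun) hbackward
end

section
/- For any map f : X → Y, cat(f) ≤ TC(f). -/
/-!
Fix `x₀ : X`. If `U ⊆ X × X` carries a homotopy section `s` of the path fibration after applying
`f × f`, then on the slice `V = {x | (x₀, x) ∈ U}` the map `f` is homotopic to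
`x ↦ f (s(x₀, x) 1)`, then back along the paths to `x ↦ f (s(x₀, x) 0)`, and finally to the
constant `f x₀`. Slicing a cover of `X × X` by such sets gives a cover of `X` of the same size.
-/

open ContinuousMap Set

section

variable {X Y Z : Type} [TopologicalSpace X] [TopologicalSpace Y] [TopologicalSpace Z]

theorem homotopic_fst_pathFib_snd_pathFib (γ : C(Z, C(unitInterval, X))) :
    (fst.comp ((pathFib X).comp γ)).Homotopic (snd.comp ((pathFib X).comp γ)) :=
  ⟨⟨⟨fun p => γ p.2 p.1, by fun_prop⟩, fun _ => rfl, fun _ => rfl⟩⟩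

theorem homotopic_comp_fst_snd_of_homotopic_pathFib (f : C(X, Y)) (γ : C(Z, C(unitInterval, X)))
    (g : C(Z, X × X))
    (hγ : ((f.prodMap f).comp ((pathFib X).comp γ)).Homotopic ((f.prodMap f).comp g)) :
    (f.comp (fst.comp g)).Homotopic (f.comp (snd.comp g)) := by
  have hfst : (fst.comp ((f.prodMap f).comp ((pathFib X).comp γ))).Homotopic
      (fst.comp ((f.prodMap f).comp g)) := (Homotopic.refl fst).comp hγ
  have hsnd : (snd.comp ((f.prodMap f).comp ((pathFib X).comp γ))).Homotopic
      (snd.comp ((f.prodMap f).comp g)) := (Homotopic.refl snd).comp hγ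
  have hpath : (f.comp (fst.comp ((pathFib X).comp γ))).Homotopic
      (f.comp (snd.comp ((pathFib X).comp γ))) :=
    (Homotopic.refl f).comp (homotopic_fst_pathFib_snd_pathFib γ)
  exact hfst.symm.trans (hpath.trans hsnd)

theorem IsFCatOpen.isOpen_slice_and_nullhomotopic {f : C(X, Y)} {U : Set (X × X)}
    (hU : IsFCatOpen (pathFib X) (f.prodMap f) U) (x₀ : X) :
    IsOpen (Prod.mk x₀ ⁻¹' U) ∧ (f.restrict (Prod.mk x₀ ⁻¹' U)).Nullhomotopic := by
  obtain ⟨hopen, s, hs⟩ := hU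
  set V := Prod.mk x₀ ⁻¹' U
  let slice : C(V, U) := ⟨fun x => ⟨(x₀, x), x.2⟩, by fun_prop⟩
  let g : C(V, X × X) := ⟨fun x => (x₀, x), by fun_prop⟩
  refine ⟨hopen.preimage (by fun_prop), f x₀,
    (homotopic_comp_fst_snd_of_homotopic_pathFib f (s.comp slice) g ?_).symm⟩
  exact hs.comp (Homotopic.refl slice)

end

theorem catMap_le_TCmap_general {X Y : Type} [TopologicalSpace X] [TopologicalSpace Y]
    [PathConnectedSpace X] (f : C(X, Y)) :
    catMap f ≤ TCmap f := by
  refine sInf_le_sInf (image_mono ?_)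
  rintro n ⟨U, hU, hcover⟩
  obtain ⟨x₀⟩ : Nonempty X := inferInstance
  refine ⟨fun i => Prod.mk x₀ ⁻¹' U i, fun i => (hU i).isOpen_slice_and_nullhomotopic x₀, ?_⟩
  rw [← preimage_iUnion, hcover, preimage_univ]

/-- `cat(f) ≤ TC(f)` for any map `f : X → Y` between path-connected spaces. -/
theorem catMap_le_TCmap {X Y : Type} [TopologicalSpace X] [TopologicalSpace Y]
    [PathConnectedSpace X] [PathConnectedSpace Y] (f : C(X, Y)) :
    catMap f ≤ TCmap f :=
  catMap_le_TCmap_general f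
end

section
/- If q : Z → Y is a fibration and q_n : (*ⁿ_Y Z) ×_Y Z → *ⁿ_Y Z is the pullback of q along the n-fold join fibration *ⁿ_Y q : *ⁿ_Y Z → Y, then secat(q_n) ≤ n. -/
open ContinuousMap Set

/-- A (Hurewicz) fibration: the homotopy lifting property with respect to all spaces. -/
def IsFibration {Z Y : Type} [TopologicalSpace Z] [TopologicalSpace Y] (q : C(Z, Y)) : Prop :=
  ∀ (W : Type) [TopologicalSpace W] (h : C(W, Z)) (H : C(W × unitInterval, Y)),
    (∀ w, H (w, 0) = q (h w)) →
    ∃ G : C(W × unitInterval, Z), (∀ w, G (w, 0) = h w) ∧ ∀ w t, q (G (w, t)) = H (w, t)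

/-- The identifications defining the double mapping cylinder of the two projections
of the fiber product of `q₁` and `q₂` over `Y`: at time `0` collapse to `Z₁`, at
time `1` collapse to `Z₂`. -/
inductive JoinRel {Z₁ Z₂ Y : Type} (q₁ : Z₁ → Y) (q₂ : Z₂ → Y) :
    ({x : Z₁ × Z₂ // q₁ x.1 = q₂ x.2} × unitInterval) ⊕ (Z₁ ⊕ Z₂) →
    ({x : Z₁ × Z₂ // q₁ x.1 = q₂ x.2} × unitInterval) ⊕ (Z₁ ⊕ Z₂) → Prop
  | zero (x) : JoinRel q₁ q₂ (Sum.inl (x, 0)) (Sum.inr (Sum.inl x.1.1))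
  | one (x) : JoinRel q₁ q₂ (Sum.inl (x, 1)) (Sum.inr (Sum.inr x.1.2))

/-- The fiberwise join `Z₁ *_Y Z₂`: the double mapping cylinder of the two projections
of the fiber product `Z₁ ×_Y Z₂`. -/
def FibJoin {Z₁ Z₂ Y : Type} [TopologicalSpace Z₁] [TopologicalSpace Z₂] [TopologicalSpace Y]
    (q₁ : C(Z₁, Y)) (q₂ : C(Z₂, Y)) : Type :=
  Quot (JoinRel q₁ q₂)

instance {Z₁ Z₂ Y : Type} [TopologicalSpace Z₁] [TopologicalSpace Z₂] [TopologicalSpace Y]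
    (q₁ : C(Z₁, Y)) (q₂ : C(Z₂, Y)) : TopologicalSpace (FibJoin q₁ q₂) :=
  instTopologicalSpaceQuot

/-- The induced map `Z₁ *_Y Z₂ → Y` of the fiberwise join. -/
noncomputable def fibJoinMap {Z₁ Z₂ Y : Type} [TopologicalSpace Z₁] [TopologicalSpace Z₂]
    [TopologicalSpace Y] (q₁ : C(Z₁, Y)) (q₂ : C(Z₂, Y)) : C(FibJoin q₁ q₂, Y) :=
  ⟨Quot.lift (Sum.elim (fun x => q₁ x.1.1.1) (Sum.elim q₁ q₂))
      (by rintro _ _ (⟨x⟩ | ⟨x⟩) <;> simp [x.2]),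
    continuous_quot_lift _ (Continuous.sumElim
      (q₁.continuous.comp (continuous_fst.comp (continuous_subtype_val.comp continuous_fst)))
      (Continuous.sumElim q₁.continuous q₂.continuous))⟩

/-- A space over `Y`: the carrier, its topology and the structure map to `Y`. -/
structure SpaceOver (Y : Type) [TopologicalSpace Y] where
  total : Type
  top : TopologicalSpace total
  proj : @ContinuousMap total Y top _

attribute [instance] SpaceOver.top

/-- The `n`-fold fiberwise join of `q : Z → Y` with itself:
`*⁰_Y Z = Z` and `*ⁿ_Y Z = (*ⁿ⁻¹_Y Z) *_Y Z`, together with the induced map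
`*ⁿ_Y q : *ⁿ_Y Z → Y`. -/
noncomputable def nFoldJoin {Z Y : Type} [TopologicalSpace Z] [TopologicalSpace Y]
    (q : C(Z, Y)) : ℕ → SpaceOver Y
  | 0 => ⟨Z, inferInstance, q⟩
  | n + 1 => ⟨FibJoin (nFoldJoin q n).proj q, inferInstance, fibJoinMap (nFoldJoin q n).proj q⟩

/-! The `n`-fold join `*ⁿ_Y Z` is covered by `n + 1` open sets over each of which `*ⁿ_Y q` lifts
through `q`. In `Z₁ *_Y Z` the part away from the `Z₁` end projects to `Z`, which is one such set,
and the part away from the `Z` end projects to `Z₁ = *ⁿ⁻¹_Y Z`, so it inherits the `n` lifting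
opens of `Z₁` by induction. A lift through `q` over `U` is the same as a section over `U` of the
pullback of `q`, hence `secat(q_n) ≤ n`. -/

theorem ContinuousOn.sumElim_of_isOpen {X₁ X₂ W : Type*} [TopologicalSpace X₁]
    [TopologicalSpace X₂] [TopologicalSpace W] {f : X₁ → W} {g : X₂ → W} {s : Set (X₁ ⊕ X₂)}
    (hs : IsOpen s) (hf : ContinuousOn f (Sum.inl ⁻¹' s)) (hg : ContinuousOn g (Sum.inr ⁻¹' s)) :
    ContinuousOn (Sum.elim f g) s := by
  rintro (x | x) hx
  · exact ((Topology.IsOpenEmbedding.inl.continuousAt_iff (g := Sum.elim f g)).mp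
      (hf.continuousAt ((hs.preimage continuous_inl).mem_nhds hx))).continuousWithinAt
  · exact ((Topology.IsOpenEmbedding.inr.continuousAt_iff (g := Sum.elim f g)).mp
      (hg.continuousAt ((hs.preimage continuous_inr).mem_nhds hx))).continuousWithinAt

namespace FibJoin

variable {Z₁ Z₂ Y X : Type} [TopologicalSpace Z₁] [TopologicalSpace Z₂] [TopologicalSpace Y]
  {q₁ : C(Z₁, Y)} {q₂ : C(Z₂, Y)} {V : Set Z₁} {W : Set Z₂}

/- `nearFst V` is the part of the join away from the `Z₂` end whose `Z₁`-coordinate lies in `V`;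
`extendFst f x₀` is `f` of that coordinate, with the junk value `x₀` at the `Z₂` end. The `Snd`
versions are the mirror images. -/
def nearFst (V : Set Z₁) : Set (FibJoin q₁ q₂) :=
  {y | Quot.lift (Sum.elim (fun x => x.2 ≠ 1 ∧ x.1.1.1 ∈ V) (Sum.elim (· ∈ V) fun _ => False))
    (by rintro _ _ (⟨x⟩ | ⟨x⟩) <;> simp) y}

def nearSnd (W : Set Z₂) : Set (FibJoin q₁ q₂) :=
  {y | Quot.lift (Sum.elim (fun x => x.2 ≠ 0 ∧ x.1.1.2 ∈ W) (Sum.elim (fun _ => False) (· ∈ W)))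
    (by rintro _ _ (⟨x⟩ | ⟨x⟩) <;> simp) y}

theorem iUnion_nearFst_union_nearSnd {ι : Type*} {V : ι → Set Z₁} (hV : ⋃ i, V i = univ) :
    (⋃ i, nearFst (q₁ := q₁) (q₂ := q₂) (V i)) ∪ nearSnd univ = univ := by
  refine eq_univ_of_forall ?_
  rintro ⟨(⟨x, t⟩ | z | z)⟩
  · by_cases ht : t = 1
    · exact Or.inr ⟨by simp [ht], trivial⟩
    · obtain ⟨i, hi⟩ := mem_iUnion.mp (hV ▸ mem_univ x.1.1)
      exact Or.inl (mem_iUnion.mpr ⟨i, ht, hi⟩)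
  · obtain ⟨i, hi⟩ := mem_iUnion.mp (hV ▸ mem_univ z)
    exact Or.inl (mem_iUnion.mpr ⟨i, hi⟩)
  · exact Or.inr trivial

theorem isOpen_nearFst (hV : IsOpen V) : IsOpen (nearFst (q₁ := q₁) (q₂ := q₂) V) :=
  isQuotientMap_quot_mk.isOpen_preimage.mp <| isOpen_sum_iff.mpr
    ⟨(isOpen_ne_fun continuous_snd continuous_const).inter (hV.preimage (by fun_prop)),
      isOpen_sum_iff.mpr ⟨hV, isOpen_empty⟩⟩

theorem isOpen_nearSnd (hW : IsOpen W) : IsOpen (nearSnd (q₁ := q₁) (q₂ := q₂) W) :=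
  isQuotientMap_quot_mk.isOpen_preimage.mp <| isOpen_sum_iff.mpr
    ⟨(isOpen_ne_fun continuous_snd continuous_const).inter (hW.preimage (by fun_prop)),
      isOpen_sum_iff.mpr ⟨isOpen_empty, hW⟩⟩

noncomputable def extendFst (f : Z₁ → X) (x₀ : X) : FibJoin q₁ q₂ → X :=
  Quot.lift (Sum.elim (fun x => if x.2 = 1 then x₀ else f x.1.1.1) (Sum.elim f fun _ => x₀))
    (by rintro _ _ (⟨x⟩ | ⟨x⟩) <;> simp)

noncomputable def extendSnd (f : Z₂ → X) (x₀ : X) : FibJoin q₁ q₂ → X :=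
  Quot.lift (Sum.elim (fun x => if x.2 = 0 then x₀ else f x.1.1.2) (Sum.elim (fun _ => x₀) f))
    (by rintro _ _ (⟨x⟩ | ⟨x⟩) <;> simp)

theorem continuousOn_extendFst [TopologicalSpace X] {f : Z₁ → X} (hV : IsOpen V)
    (hf : ContinuousOn f V) (x₀ : X) :
    ContinuousOn (extendFst (q₁ := q₁) (q₂ := q₂) f x₀) (nearFst V) := by
  have hopen := (isOpen_nearFst (q₁ := q₁) (q₂ := q₂) hV).preimage continuous_quot_mk
  refine (isQuotientMap_quot_mk.continuousOn_isOpen_iff (isOpen_nearFst hV)).mpr <|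
    ContinuousOn.sumElim_of_isOpen hopen ?_
    (.sumElim_of_isOpen (hopen.preimage continuous_inr) hf continuousOn_const)
  exact (hf.comp (f := fun x : _ × unitInterval => x.1.1.1) (by fun_prop) fun _ hx => hx.2).congr
    fun _ hx => if_neg hx.1

theorem continuousOn_extendSnd [TopologicalSpace X] {f : Z₂ → X} (hW : IsOpen W)
    (hf : ContinuousOn f W) (x₀ : X) :
    ContinuousOn (extendSnd (q₁ := q₁) (q₂ := q₂) f x₀) (nearSnd W) := by
  have hopen := (isOpen_nearSnd (q₁ := q₁) (q₂ := q₂) hW).preimage continuous_quot_mk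
  refine (isQuotientMap_quot_mk.continuousOn_isOpen_iff (isOpen_nearSnd hW)).mpr <|
    ContinuousOn.sumElim_of_isOpen hopen ?_
    (.sumElim_of_isOpen (hopen.preimage continuous_inr) continuousOn_const hf)
  exact (hf.comp (f := fun x : _ × unitInterval => x.1.1.2) (by fun_prop) fun _ hx => hx.2).congr
    fun _ hx => if_neg hx.1

theorem eqOn_comp_extendFst {g : X → Y} {f : Z₁ → X} (h : EqOn (g ∘ f) q₁ V) (x₀ : X) :
    EqOn (g ∘ extendFst f x₀) (fibJoinMap q₁ q₂) (nearFst V) := by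
  rintro ⟨(⟨x, t⟩ | z | z)⟩ hy
  · obtain ⟨ht, hx⟩ : t ≠ 1 ∧ x.1.1 ∈ V := hy
    show g (if t = 1 then x₀ else f x.1.1) = q₁ x.1.1
    rw [if_neg ht]
    exact h hx
  · exact h hy
  · exact hy.elim

theorem eqOn_comp_extendSnd {g : X → Y} {f : Z₂ → X} (h : EqOn (g ∘ f) q₂ W) (x₀ : X) :
    EqOn (g ∘ extendSnd f x₀) (fibJoinMap q₁ q₂) (nearSnd W) := by
  rintro ⟨(⟨x, t⟩ | z | z)⟩ hy
  · obtain ⟨ht, hx⟩ : t ≠ 0 ∧ x.1.2 ∈ W := hy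
    show g (if t = 0 then x₀ else f x.1.2) = q₁ x.1.1
    rw [if_neg ht, x.2]
    exact h hx
  · exact hy.elim
  · exact h hy

end FibJoin

section LiftingCover

variable {B Z Y : Type} [TopologicalSpace B] [TopologicalSpace Z] [TopologicalSpace Y]
  {q : C(Z, Y)} {p : C(B, Y)} {U : Set B} {m : ℕ}

/- Equivalently, `U` is open and the pullback of `q` along `p` has a section over `U`. -/
def IsLiftingOpen (q : C(Z, Y)) (p : C(B, Y)) (U : Set B) : Prop :=
  IsOpen U ∧ ∃ c : B → Z, ContinuousOn c U ∧ EqOn (q ∘ c) p U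

def HasLiftingCover (q : C(Z, Y)) (p : C(B, Y)) (m : ℕ) : Prop :=
  ∃ U : Fin (m + 1) → Set B, (∀ i, IsLiftingOpen q p (U i)) ∧ ⋃ i, U i = univ

theorem isLiftingOpen_univ_self : IsLiftingOpen q q univ :=
  ⟨isOpen_univ, id, continuousOn_id, fun _ _ => rfl⟩

theorem IsLiftingOpen.nearFst {Z₂ : Type} [TopologicalSpace Z₂] {q₂ : C(Z₂, Y)} (z₀ : Z)
    (h : IsLiftingOpen q p U) : IsLiftingOpen q (fibJoinMap p q₂) (FibJoin.nearFst U) :=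
  let ⟨hU, c, hc, hqc⟩ := h
  ⟨FibJoin.isOpen_nearFst hU, FibJoin.extendFst c z₀, FibJoin.continuousOn_extendFst hU hc z₀,
    FibJoin.eqOn_comp_extendFst hqc z₀⟩

theorem IsLiftingOpen.nearSnd {Z₁ : Type} [TopologicalSpace Z₁] {q₁ : C(Z₁, Y)} (z₀ : Z)
    (h : IsLiftingOpen q p U) : IsLiftingOpen q (fibJoinMap q₁ p) (FibJoin.nearSnd U) :=
  let ⟨hU, c, hc, hqc⟩ := h
  ⟨FibJoin.isOpen_nearSnd hU, FibJoin.extendSnd c z₀, FibJoin.continuousOn_extendSnd hU hc z₀,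
    FibJoin.eqOn_comp_extendSnd hqc z₀⟩

theorem HasLiftingCover.fibJoin (z₀ : Z) (h : HasLiftingCover q p m) :
    HasLiftingCover q (fibJoinMap p q) (m + 1) := by
  obtain ⟨U, hU, hcover⟩ := h
  refine ⟨Fin.cons (FibJoin.nearSnd univ) fun j => FibJoin.nearFst (U j),
    Fin.cases (isLiftingOpen_univ_self.nearSnd z₀) fun j => (hU j).nearFst z₀, ?_⟩
  rw [← FibJoin.iUnion_nearFst_union_nearSnd hcover]
  ext y
  simp only [mem_iUnion, mem_union, Fin.exists_fin_succ, Fin.cons_zero, Fin.cons_succ, or_comm]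

theorem hasLiftingCover_of_isEmpty [IsEmpty B] : HasLiftingCover q p m :=
  ⟨fun _ => univ, fun _ => ⟨isOpen_univ, isEmptyElim, fun x => isEmptyElim x,
    fun x => isEmptyElim x⟩, iUnion_const univ⟩

theorem isEmpty_nFoldJoin (q : C(Z, Y)) [IsEmpty Z] (n : ℕ) : IsEmpty (nFoldJoin q n).total := by
  induction n with
  | zero => assumption
  | succ n ih => exact inferInstanceAs (IsEmpty (Quot _))

theorem hasLiftingCover_nFoldJoin (q : C(Z, Y)) (n : ℕ) :
    HasLiftingCover q (nFoldJoin q n).proj n := by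
  rcases isEmpty_or_nonempty Z with hZ | ⟨⟨z₀⟩⟩
  · have := isEmpty_nFoldJoin q n
    exact hasLiftingCover_of_isEmpty
  induction n with
  | zero => exact ⟨fun _ => univ, fun _ => isLiftingOpen_univ_self, iUnion_const univ⟩
  | succ n ih => exact ih.fibJoin z₀

theorem IsLiftingOpen.isFCatOpen_id (qp : C({x : B × Z // p x.1 = q x.2}, B))
    (hqp : ∀ x, qp x = x.1.1) (h : IsLiftingOpen q p U) :
    IsFCatOpen qp (ContinuousMap.id B) U := by
  obtain ⟨hU, c, hc, hqc⟩ := h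
  let s : C(U, {x : B × Z // p x.1 = q x.2}) :=
    ⟨fun u => ⟨(u, c u), (hqc u.2).symm⟩,
      (continuous_subtype_val.prodMk hc.domRestrict).subtype_mk _⟩
  refine ⟨hU, s, ?_⟩
  convert Homotopic.refl _
  ext u
  exact (hqp (s u)).symm

theorem secatF_id_le_of_hasLiftingCover (qp : C({x : B × Z // p x.1 = q x.2}, B))
    (hqp : ∀ x, qp x = x.1.1) (h : HasLiftingCover q p m) :
    secatF qp (ContinuousMap.id B) ≤ m :=
  let ⟨U, hU, hcover⟩ := h
  sInf_le ⟨m, ⟨U, fun i => (hU i).isFCatOpen_id qp hqp, hcover⟩, rfl⟩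

end LiftingCover

theorem secat_pullback_nFoldJoin_le_general {Z Y : Type} [TopologicalSpace Z] [TopologicalSpace Y]
    (q : C(Z, Y)) (n : ℕ)
    (qn : C({x : (nFoldJoin q n).total × Z // (nFoldJoin q n).proj x.1 = q x.2},
            (nFoldJoin q n).total))
    (hqn : ∀ x, qn x = x.1.1) :
    secatF qn (ContinuousMap.id (nFoldJoin q n).total) ≤ (n : ℕ∞) :=
  secatF_id_le_of_hasLiftingCover qn hqn (hasLiftingCover_nFoldJoin q n)

/-- if `q : Z → Y` is a fibration and `q_n : (*ⁿ_Y Z) ×_Y Z → *ⁿ_Y Z` is the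
pullback of `q` along the `n`-fold join fibration `*ⁿ_Y q`, then `secat(q_n) ≤ n`
(sectional category being `secat(q_n) = secat_{id}(q_n)`). -/
theorem secat_pullback_nFoldJoin_le {Z Y : Type} [TopologicalSpace Z] [TopologicalSpace Y]
    (q : C(Z, Y)) (hq : IsFibration q) (n : ℕ)
    (qn : C({x : (nFoldJoin q n).total × Z // (nFoldJoin q n).proj x.1 = q x.2},
            (nFoldJoin q n).total))
    (hqn : ∀ x, qn x = x.1.1) :
    secatF qn (ContinuousMap.id (nFoldJoin q n).total) ≤ (n : ℕ∞) :=
  secat_pullback_nFoldJoin_le_general q n qn hqn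
end
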